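/- With α_0 = Σ_{(a,b)∈S} r_0((a,b)) and α_k = inf over (x_{−k}^{−1}, y_{−k}^{−1}) of Σ_{(a,b)∈S} r_k((a,b)|(x_{−k}^{−1}, y_{−k}^{−1})), the sequence (α_k) is non-decreasing, and if the transition probability P is continuous then α_k → 1 as k → ∞; consequently λ_0 = α_0 and λ_k = α_k − α_{k−1} for k ≥ 1 define a probability distribution on the non-negative integers. -/
import Mathlib


open Filter

/-- With `α 0 = Σ_{ab ∈ S} r 0 ab` and
`α k = inf over ordered pasts of Σ_{ab ∈ S} r k ab (x,y)` (the sum running over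
`S = {(0,0),(0,1),(1,1)}`), the sequence `(α k)` is non-decreasing; if the
transition probability `P` is continuous then `α k → 1`, and consequently
`λ 0 = α 0`, `λ k = α k - α (k-1)` for `k ≥ 1` defines a probability
distribution on `ℕ`. -/
theorem alpha_monotone_tendsto_one_lambda_prob
    (P : Bool × Bool → (ℕ → Bool) → (ℕ → Bool) → ℝ)
    (hP0 : ∀ ab x y, 0 ≤ P ab x y)
    (hPsum : ∀ x y : ℕ → Bool, (∀ i, x i ≤ y i) →
      P (false, false) x y + P (false, true) x y + P (true, true) x y = 1)
    (β : ℕ → ℝ) (hβ : Tendsto β atTop (nhds 0))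
    (hcont : ∀ (k : ℕ) (ab : Bool × Bool) (x y u v : ℕ → Bool),
      (∀ i, x i ≤ y i) → (∀ i, u i ≤ v i) → (∀ i < k, x i = u i ∧ y i = v i) →
      |P ab x y - P ab u v| ≤ β k)
    (r : ℕ → Bool × Bool → (ℕ → Bool) → (ℕ → Bool) → ℝ)
    (hr : ∀ k ab x y, r k ab x y =
      sInf {c : ℝ | ∃ u v : ℕ → Bool, (∀ i, u i ≤ v i) ∧
        (∀ i < k, u i = x i ∧ v i = y i) ∧ c = P ab u v})
    (α : ℕ → ℝ)
    (hα : ∀ k, α k = sInf {c : ℝ | ∃ x y : ℕ → Bool, (∀ i, x i ≤ y i) ∧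
      c = r k (false, false) x y + r k (false, true) x y + r k (true, true) x y})
    (lam : ℕ → ℝ)
    (hlam0 : lam 0 = α 0) (hlamk : ∀ k : ℕ, 1 ≤ k → lam k = α k - α (k - 1)) :
    Monotone α ∧ Tendsto α atTop (nhds 1) ∧ (∀ k, 0 ≤ lam k) ∧ HasSum lam 1 := by
  classical
  -- Facts about the sets defining r
  have hRne : ∀ k ab (x y : ℕ → Bool), (∀ i, x i ≤ y i) →
      Set.Nonempty {c : ℝ | ∃ u v : ℕ → Bool, (∀ i, u i ≤ v i) ∧
        (∀ i < k, u i = x i ∧ v i = y i) ∧ c = P ab u v} :=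
    fun k ab x y hxy => ⟨P ab x y, x, y, hxy, fun i _ => ⟨rfl, rfl⟩, rfl⟩
  have hRbdd : ∀ k ab (x y : ℕ → Bool),
      BddBelow {c : ℝ | ∃ u v : ℕ → Bool, (∀ i, u i ≤ v i) ∧
        (∀ i < k, u i = x i ∧ v i = y i) ∧ c = P ab u v} := by
    intro k ab x y
    refine ⟨0, ?_⟩
    rintro c ⟨u, v, huv, _, rfl⟩
    exact hP0 ab u v
  have hr0 : ∀ k ab (x y : ℕ → Bool), (∀ i, x i ≤ y i) → 0 ≤ r k ab x y := by
    intro k ab x y hxy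
    rw [hr]
    refine le_csInf (hRne k ab x y hxy) ?_
    rintro c ⟨u, v, huv, _, rfl⟩
    exact hP0 ab u v
  have hrleP : ∀ k ab (x y : ℕ → Bool), (∀ i, x i ≤ y i) → r k ab x y ≤ P ab x y := by
    intro k ab x y hxy
    rw [hr]
    exact csInf_le (hRbdd k ab x y) ⟨x, y, hxy, fun i _ => ⟨rfl, rfl⟩, rfl⟩
  have hrge : ∀ k ab (x y : ℕ → Bool), (∀ i, x i ≤ y i) →
      P ab x y - β k ≤ r k ab x y := by
    intro k ab x y hxy
    rw [hr]
    refine le_csInf (hRne k ab x y hxy) ?_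
    rintro c ⟨u, v, huv, hag, rfl⟩
    have h := hcont k ab x y u v hxy huv
      (fun i hi => ⟨(hag i hi).1.symm, (hag i hi).2.symm⟩)
    have h2 := abs_le.1 h
    linarith [h2.1, h2.2]
  have hrmono : ∀ k ab (x y : ℕ → Bool), (∀ i, x i ≤ y i) →
      r k ab x y ≤ r (k + 1) ab x y := by
    intro k ab x y hxy
    rw [hr, hr]
    refine le_csInf (hRne (k + 1) ab x y hxy) ?_
    rintro c ⟨u, v, huv, hag, rfl⟩
    exact csInf_le (hRbdd k ab x y)
      ⟨u, v, huv, fun i hi => hag i (Nat.lt_succ_of_lt hi), rfl⟩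
  -- Facts about the sets defining α
  have hAne : ∀ k, Set.Nonempty {c : ℝ | ∃ x y : ℕ → Bool, (∀ i, x i ≤ y i) ∧
      c = r k (false, false) x y + r k (false, true) x y + r k (true, true) x y} :=
    fun k => ⟨_, fun _ => false, fun _ => false, fun _ => le_refl _, rfl⟩
  have hAbdd : ∀ k, BddBelow {c : ℝ | ∃ x y : ℕ → Bool, (∀ i, x i ≤ y i) ∧
      c = r k (false, false) x y + r k (false, true) x y + r k (true, true) x y} := by
    intro k
    refine ⟨0, ?_⟩
    rintro c ⟨x, y, hxy, rfl⟩
    have h1 := hr0 k (false, false) x y hxy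
    have h2 := hr0 k (false, true) x y hxy
    have h3 := hr0 k (true, true) x y hxy
    linarith
  have hα0 : ∀ k, 0 ≤ α k := by
    intro k
    rw [hα]
    refine le_csInf (hAne k) ?_
    rintro c ⟨x, y, hxy, rfl⟩
    have h1 := hr0 k (false, false) x y hxy
    have h2 := hr0 k (false, true) x y hxy
    have h3 := hr0 k (true, true) x y hxy
    linarith
  have hαle1 : ∀ k, α k ≤ 1 := by
    intro k
    rw [hα]
    have hxy : ∀ i, (fun _ : ℕ => false) i ≤ (fun _ : ℕ => false) i := fun _ => le_refl _
    have hmem : r k (false, false) (fun _ => false) (fun _ => false) +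
        r k (false, true) (fun _ => false) (fun _ => false) +
        r k (true, true) (fun _ => false) (fun _ => false) ∈
        {c : ℝ | ∃ x y : ℕ → Bool, (∀ i, x i ≤ y i) ∧
          c = r k (false, false) x y + r k (false, true) x y + r k (true, true) x y} :=
      ⟨_, _, hxy, rfl⟩
    refine le_trans (csInf_le (hAbdd k) hmem) ?_
    have h1 := hrleP k (false, false) (fun _ => false) (fun _ => false) hxy
    have h2 := hrleP k (false, true) (fun _ => false) (fun _ => false) hxy
    have h3 := hrleP k (true, true) (fun _ => false) (fun _ => false) hxy
    have hs := hPsum (fun _ => false) (fun _ => false) hxy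
    linarith
  have hαge : ∀ k, 1 - 3 * β k ≤ α k := by
    intro k
    rw [hα]
    refine le_csInf (hAne k) ?_
    rintro c ⟨x, y, hxy, rfl⟩
    have h1 := hrge k (false, false) x y hxy
    have h2 := hrge k (false, true) x y hxy
    have h3 := hrge k (true, true) x y hxy
    have hs := hPsum x y hxy
    linarith
  have hmono : Monotone α := by
    apply monotone_nat_of_le_succ
    intro k
    rw [hα (k + 1)]
    refine le_csInf (hAne (k + 1)) ?_
    rintro c ⟨x, y, hxy, rfl⟩
    have h0 : α k ≤ r k (false, false) x y + r k (false, true) x y +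
        r k (true, true) x y := by
      rw [hα]
      exact csInf_le (hAbdd k) ⟨x, y, hxy, rfl⟩
    have h1 := hrmono k (false, false) x y hxy
    have h2 := hrmono k (false, true) x y hxy
    have h3 := hrmono k (true, true) x y hxy
    linarith
  have htendα : Tendsto α atTop (nhds 1) := by
    have hlo : Tendsto (fun k => 1 - 3 * β k) atTop (nhds 1) := by
      have := (tendsto_const_nhds : Tendsto (fun _ : ℕ => (1 : ℝ)) atTop (nhds 1)).sub
        (hβ.const_mul 3)
      simpa using this
    exact tendsto_of_tendsto_of_tendsto_of_le_of_le hlo tendsto_const_nhds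
      (fun k => hαge k) (fun k => hαle1 k)
  have hlamnn : ∀ k, 0 ≤ lam k := by
    intro k
    cases k with
    | zero => rw [hlam0]; exact hα0 0
    | succ n =>
      rw [hlamk (n + 1) (by omega)]
      have : α n ≤ α (n + 1) := hmono (Nat.le_succ n)
      simp only [Nat.add_sub_cancel]
      linarith
  have hsum : ∀ n, ∑ i ∈ Finset.range (n + 1), lam i = α n := by
    intro n
    induction n with
    | zero => simpa using hlam0
    | succ m ih =>
      rw [Finset.sum_range_succ, ih, hlamk (m + 1) (by omega)]
      simp only [Nat.add_sub_cancel]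
      ring
  have htend1 : Tendsto (fun n => ∑ i ∈ Finset.range n, lam i) atTop (nhds 1) := by
    have h1 : Tendsto (fun n => ∑ i ∈ Finset.range (n + 1), lam i) atTop (nhds 1) := by
      have : (fun n => ∑ i ∈ Finset.range (n + 1), lam i) = fun n => α n := by
        funext n; exact hsum n
      rw [this]; exact htendα
    exact (tendsto_add_atTop_iff_nat 1).1 h1
  exact ⟨hmono, htendα, hlamnn, (hasSum_iff_tendsto_nat_of_nonneg hlamnn 1).2 htend1⟩
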